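/- The one-parameter family of the paper's lattices (K_n, ⊆) has sup-irreducible elements in canonical bijection with the poset whose Hasse diagram has vertices S_n and successor relations e_i ≺_s v_i (for 2 ≤ i ≤ n-2) and e_{i+1} ≺_s v_i (for 2 ≤ i ≤ n-3); concretely, the sup-irreducible elements of K_n are exactly the sets {e_i} for 2 ≤ i ≤ n-2, {v_i, e_i, e_{i+1}} for 2 ≤ i ≤ n-3, and {v_{n-2}, e_{n-2}}. -/

import Mathlib

/-!
Every code `χ` is the union of the principal codes `⟨x⟩`, the least codes containing a symbol
`x ∈ χ`, so a sup-irreducible code must be one of them. Conversely `⟨x⟩` is sup-irreducible: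
if `⟨x⟩ = a ∪ b` then `x` lies in `a`, say, so `⟨x⟩ ⊆ a ⊆ ⟨x⟩`. It remains to list the
principal codes: `⟨e_i⟩ = {e_i}`, `⟨v_i⟩ = {v_i, e_i, e_{i+1}}` for `i < n-2`, and
`⟨v_{n-2}⟩ = {v_{n-2}, e_{n-2}}`.
-/

/-- Symbols of Enriques diagrams: `Sum.inl k` is the vertex `v_k`,
`Sum.inr k` is the edge `e_k`. -/
abbrev ESym : Type := ℕ ⊕ ℕ

def vtx (k : ℕ) : ESym := Sum.inl k
def edg (k : ℕ) : ESym := Sum.inr k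

/-- The set `S_n = {v_2,…,v_{n-2}, e_2,…,e_{n-2}}` of undetermined symbols. -/
def symbols (n : ℕ) : Finset ESym :=
  ((Finset.Icc 2 (n - 2)).image vtx) ∪ ((Finset.Icc 2 (n - 2)).image edg)

/-- A code of an Enriques diagram of complexity `n`: a subset `χ ⊆ S_n` such that
`v_i ∈ χ` implies `e_i ∈ χ` and (`e_{i+1} ∈ χ` or `i = n-2`). -/
def IsCode (n : ℕ) (χ : Finset ESym) : Prop :=
  χ ⊆ symbols n ∧
    ∀ i ∈ Finset.Icc 2 (n - 2), vtx i ∈ χ →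
      edg i ∈ χ ∧ (edg (i + 1) ∈ χ ∨ i = n - 2)

instance (n : ℕ) : DecidablePred (IsCode n) := fun χ => by
  unfold IsCode; infer_instance

/-- Sup-irreducibility in the lattice `K_n`: not the bottom element `∅`, and
not a join of two strictly smaller codes. -/
def SupIrredCode (n : ℕ) (χ : Finset ESym) : Prop :=
  IsCode n χ ∧ χ ≠ ∅ ∧
    ∀ a b : Finset ESym, IsCode n a → IsCode n b → χ = a ∪ b → χ = a ∨ χ = b

@[elab_as_elim]
lemma ESym.casesVtxEdg {motive : ESym → Prop} (vtx : ∀ i, motive (vtx i))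
    (edg : ∀ i, motive (edg i)) (x : ESym) : motive x :=
  x.casesOn vtx edg

@[simp]
lemma vtx_inj {i j : ℕ} : vtx i = vtx j ↔ i = j := Sum.inl_injective.eq_iff

@[simp]
lemma edg_inj {i j : ℕ} : edg i = edg j ↔ i = j := Sum.inr_injective.eq_iff

@[simp]
lemma vtx_ne_edg (i j : ℕ) : vtx i ≠ edg j := Sum.inl_ne_inr

@[simp]
lemma edg_ne_vtx (i j : ℕ) : edg i ≠ vtx j := Sum.inr_ne_inl

@[simp]
lemma vtx_mem_symbols {n i : ℕ} : vtx i ∈ symbols n ↔ 2 ≤ i ∧ i ≤ n - 2 := by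
  simp [symbols]

@[simp]
lemma edg_mem_symbols {n i : ℕ} : edg i ∈ symbols n ↔ 2 ≤ i ∧ i ≤ n - 2 := by
  simp [symbols]

namespace IsCode

lemma empty (n : ℕ) : IsCode n ∅ :=
  ⟨Finset.empty_subset _, by simp⟩

lemma union {n : ℕ} {a b : Finset ESym} (ha : IsCode n a) (hb : IsCode n b) :
    IsCode n (a ∪ b) := by
  refine ⟨Finset.union_subset ha.1 hb.1, fun i hi hv => ?_⟩
  rcases Finset.mem_union.1 hv with hv | hv
  · obtain ⟨he, he'⟩ := ha.2 i hi hv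
    exact ⟨Finset.mem_union_left _ he, he'.imp_left (Finset.mem_union_left _)⟩
  · obtain ⟨he, he'⟩ := hb.2 i hi hv
    exact ⟨Finset.mem_union_right _ he, he'.imp_left (Finset.mem_union_right _)⟩

lemma finset_sup {n : ℕ} {ι : Type*} {s : Finset ι} {f : ι → Finset ESym}
    (h : ∀ x ∈ s, IsCode n (f x)) : IsCode n (s.sup f) := by
  induction s using Finset.cons_induction with
  | empty => exact empty n
  | cons a s _ ih =>
    rw [Finset.forall_mem_cons] at h
    rw [Finset.sup_cons]
    exact union h.1 (ih h.2)

end IsCode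

/-- The least code containing the symbol `x`, written `⟨x⟩` in the header. -/
def principalCode (n : ℕ) : ESym → Finset ESym
  | .inl i => if i = n - 2 then {vtx i, edg i} else {vtx i, edg i, edg (i + 1)}
  | .inr i => {edg i}

@[simp]
lemma principalCode_vtx (n i : ℕ) :
    principalCode n (vtx i) =
      if i = n - 2 then {vtx i, edg i} else {vtx i, edg i, edg (i + 1)} := rfl

@[simp]
lemma principalCode_edg (n i : ℕ) : principalCode n (edg i) = {edg i} := rfl

lemma mem_principalCode_self (n : ℕ) (x : ESym) : x ∈ principalCode n x := by
  cases x using ESym.casesVtxEdg with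
  | vtx i => rw [principalCode_vtx]; split_ifs <;> simp
  | edg i => simp

lemma principalCode_subset {n : ℕ} {χ : Finset ESym} (hχ : IsCode n χ) {x : ESym}
    (hx : x ∈ χ) : principalCode n x ⊆ χ := by
  cases x using ESym.casesVtxEdg with
  | edg i => simpa using hx
  | vtx i =>
    have hi : 2 ≤ i ∧ i ≤ n - 2 := vtx_mem_symbols.1 (hχ.1 hx)
    obtain ⟨he, he'⟩ := hχ.2 i (Finset.mem_Icc.2 hi) hx
    rw [principalCode_vtx]
    split_ifs with hlast
    · exact Finset.insert_subset hx (Finset.singleton_subset_iff.2 he)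
    · exact Finset.insert_subset hx <| Finset.insert_subset he <|
        Finset.singleton_subset_iff.2 (he'.resolve_right hlast)

lemma isCode_principalCode {n : ℕ} {x : ESym} (hx : x ∈ symbols n) :
    IsCode n (principalCode n x) := by
  cases x using ESym.casesVtxEdg with
  | edg i => exact ⟨by simpa using hx, fun j _ hj => by simp at hj⟩
  | vtx i =>
    have hi : 2 ≤ i ∧ i ≤ n - 2 := vtx_mem_symbols.1 hx
    rw [principalCode_vtx]
    split_ifs with hlast
    · refine ⟨by simp [Finset.insert_subset_iff, hi], fun j _ hj => ?_⟩
      simp only [Finset.mem_insert, Finset.mem_singleton, vtx_inj,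
        vtx_ne_edg, or_false] at hj
      subst hj
      simp [hlast]
    · refine ⟨?_, fun j _ hj => ?_⟩
      · simp only [Finset.insert_subset_iff, Finset.singleton_subset_iff,
          vtx_mem_symbols, edg_mem_symbols]
        omega
      · simp only [Finset.mem_insert, Finset.mem_singleton, vtx_inj,
          vtx_ne_edg, or_false] at hj
        subst hj
        simp

lemma IsCode.eq_sup_principalCode {n : ℕ} {χ : Finset ESym} (hχ : IsCode n χ) :
    χ = χ.sup (principalCode n) :=
  le_antisymm (fun x hx => Finset.le_sup (f := principalCode n) hx (mem_principalCode_self n x))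
    (Finset.sup_le fun _ hx => principalCode_subset hχ hx)

lemma SupIrredCode.exists_eq_of_eq_sup {n : ℕ} {χ : Finset ESym} (h : SupIrredCode n χ)
    {ι : Type*} {s : Finset ι} {f : ι → Finset ESym} (hf : ∀ x ∈ s, IsCode n (f x))
    (hχ : χ = s.sup f) : ∃ x ∈ s, χ = f x := by
  induction s using Finset.cons_induction with
  | empty => exact absurd hχ h.2.1
  | cons a s _ ih =>
    rw [Finset.forall_mem_cons] at hf
    rw [Finset.sup_cons] at hχ
    rcases h.2.2 _ _ hf.1 (IsCode.finset_sup hf.2) hχ with ha | hs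
    · exact ⟨a, Finset.mem_cons_self a s, ha⟩
    · obtain ⟨x, hx, hfx⟩ := ih hf.2 hs
      exact ⟨x, Finset.mem_cons_of_mem hx, hfx⟩

lemma supIrredCode_principalCode {n : ℕ} {x : ESym} (hx : x ∈ symbols n) :
    SupIrredCode n (principalCode n x) := by
  refine ⟨isCode_principalCode hx, Finset.ne_empty_of_mem (mem_principalCode_self n x),
    fun a b ha hb hab => ?_⟩
  have hxab : x ∈ a ∪ b := hab ▸ mem_principalCode_self n x
  rcases Finset.mem_union.1 hxab with hxa | hxb
  · exact Or.inl (le_antisymm (principalCode_subset ha hxa) (hab ▸ Finset.subset_union_left))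
  · exact Or.inr (le_antisymm (principalCode_subset hb hxb) (hab ▸ Finset.subset_union_right))

lemma supIrredCode_iff_exists_principalCode {n : ℕ} {χ : Finset ESym} :
    SupIrredCode n χ ↔ ∃ x ∈ symbols n, χ = principalCode n x := by
  constructor
  · intro h
    obtain ⟨x, hx, rfl⟩ := h.exists_eq_of_eq_sup (fun _ hx => isCode_principalCode (h.1.1 hx))
      h.1.eq_sup_principalCode
    exact ⟨x, h.1.1 hx, rfl⟩
  · rintro ⟨x, hx, rfl⟩
    exact supIrredCode_principalCode hx

lemma exists_principalCode_iff {n : ℕ} (hn : 4 ≤ n) {χ : Finset ESym} :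
    (∃ x ∈ symbols n, χ = principalCode n x) ↔
      ((∃ i, 2 ≤ i ∧ i ≤ n - 2 ∧ χ = {edg i}) ∨
       (∃ i, 2 ≤ i ∧ i ≤ n - 3 ∧ χ = {vtx i, edg i, edg (i + 1)}) ∨
       χ = {vtx (n - 2), edg (n - 2)}) := by
  constructor
  · rintro ⟨x, hx, rfl⟩
    cases x using ESym.casesVtxEdg with
    | edg i => exact Or.inl ⟨i, by simpa using hx⟩
    | vtx i =>
      obtain ⟨hi₂, hin⟩ := vtx_mem_symbols.1 hx
      by_cases hlast : i = n - 2
      · subst hlast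
        simp
      · exact Or.inr (Or.inl ⟨i, hi₂, by omega, by simp [hlast]⟩)
  · rintro (⟨i, hi₂, hin, rfl⟩ | ⟨i, hi₂, hin, rfl⟩ | rfl)
    · exact ⟨edg i, edg_mem_symbols.2 ⟨hi₂, hin⟩, rfl⟩
    · exact ⟨vtx i, vtx_mem_symbols.2 ⟨hi₂, by omega⟩, by simp [show i ≠ n - 2 by omega]⟩
    · exact ⟨vtx (n - 2), vtx_mem_symbols.2 ⟨by omega, le_rfl⟩, by simp⟩

/-- The sup-irreducible elements of `K_n` are exactly `{e_i}` for `2 ≤ i ≤ n-2`,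
`{v_i, e_i, e_{i+1}}` for `2 ≤ i ≤ n-3`, and `{v_{n-2}, e_{n-2}}`. -/
theorem stmt8 (n : ℕ) (hn : 4 ≤ n) (χ : Finset ESym) :
    SupIrredCode n χ ↔
      ((∃ i, 2 ≤ i ∧ i ≤ n - 2 ∧ χ = {edg i}) ∨
       (∃ i, 2 ≤ i ∧ i ≤ n - 3 ∧ χ = {vtx i, edg i, edg (i + 1)}) ∨
       χ = {vtx (n - 2), edg (n - 2)}) :=
  supIrredCode_iff_exists_principalCode.trans (exists_principalCode_iff hn)
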